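/- arXiv:2004.07616 — 2 statements merged into one kernel-verified Lean document; each statement's English description precedes it below -/
import Mathlib

section
/- Let L > 0, a ∈ (0,1). Define f₁(s) = tan(L√(1−s²)) and f₂(s) = aL√(1−s²)/(a − Ls) for s ∈ (0,1). If 0 < a < L < 1, then there exists s₀ ∈ (0, a/L) with f₁(s₀) = f₂(s₀). -/
/-!
Multiplying out the denominator, it suffices to find a zero in `(0, a/L)` of
`g s = tan (L √(1 - s²)) (a - L s) - a L √(1 - s²)`, which is continuous on `[0, a/L]` because
`L √(1 - s²)` stays in `[0, L] ⊂ [0, π/2)`. Since `tan L > L`, `g 0 = a (tan L - L) > 0`, while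
the first term vanishes at `s = a/L` and so `g (a/L) = -a L √(1 - (a/L)²) < 0`.
-/

open Real Set

lemma mul_sqrt_one_sub_sq_mem_Icc {L : ℝ} (hL : 0 ≤ L) (s : ℝ) :
    L * √(1 - s ^ 2) ∈ Icc 0 L :=
  ⟨by positivity,
    mul_le_of_le_one_right hL (sqrt_le_one.mpr (by nlinarith [sq_nonneg s]))⟩

lemma continuous_tan_mul_sqrt_one_sub_sq {L : ℝ} (hL₀ : 0 ≤ L) (hL : L < π / 2) :
    Continuous fun s : ℝ => tan (L * √(1 - s ^ 2)) := by
  refine continuousOn_tan_Ioo.comp_continuous (by fun_prop) fun s => ?_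
  obtain ⟨h₀, h₁⟩ := mul_sqrt_one_sub_sq_mem_Icc hL₀ s
  exact ⟨by linarith [pi_pos], by linarith⟩

lemma exists_tan_mul_sqrt_mul_sub_eq {L a : ℝ} (ha : 0 < a) (haL : a < L) (hL : L < π / 2) :
    ∃ s ∈ Ioo 0 (a / L), tan (L * √(1 - s ^ 2)) * (a - L * s) = a * L * √(1 - s ^ 2) := by
  have hL₀ : 0 < L := ha.trans haL
  set g : ℝ → ℝ := fun s => tan (L * √(1 - s ^ 2)) * (a - L * s) - a * L * √(1 - s ^ 2)
  have hg : Continuous g := by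
    have := continuous_tan_mul_sqrt_one_sub_sq hL₀.le hL
    fun_prop
  have hg_zero : 0 < g 0 := by
    have hval : g 0 = a * (tan L - L) := by simp only [g]; norm_num; ring
    rw [hval]
    exact mul_pos ha (sub_pos.mpr (lt_tan hL₀ hL))
  have hg_end : g (a / L) < 0 := by
    have hlt : a / L < 1 := (div_lt_one hL₀).mpr haL
    have hsqrt : 0 < √(1 - (a / L) ^ 2) := sqrt_pos.mpr (by nlinarith [div_pos ha hL₀])
    have hvanish : a - L * (a / L) = 0 := by field_simp; ring
    simp only [g, hvanish, mul_zero, zero_sub]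
    linarith [mul_pos (mul_pos ha hL₀) hsqrt]
  obtain ⟨s, hs, hgs⟩ :=
    intermediate_value_Ioo' (div_pos ha hL₀).le hg.continuousOn ⟨hg_end, hg_zero⟩
  exact ⟨s, hs, sub_eq_zero.mp hgs⟩

theorem stmt_0 (L a : ℝ) (ha : 0 < a) (haL : a < L) (hL : L < 1) :
    ∃ s₀ ∈ Set.Ioo (0:ℝ) (a / L),
      Real.tan (L * Real.sqrt (1 - s₀^2)) =
        a * L * Real.sqrt (1 - s₀^2) / (a - L * s₀) := by
  have hL₀ : 0 < L := ha.trans haL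
  obtain ⟨s, hs, heq⟩ :=
    exists_tan_mul_sqrt_mul_sub_eq ha haL (by linarith [pi_gt_three])
  have hden : 0 < a - L * s := by
    have := (lt_div_iff₀ hL₀).mp hs.2
    linarith
  exact ⟨s, hs, (eq_div_iff hden.ne').mpr heq⟩
end

section
/- Let β > 0, A ≥ 1, L > 0, K(p) = ∫_{Ap}^∞ (sin α)/α dα. Then there is C such that for all t ∈ ℝ and all 0 < s ≤ r ≤ L, |(1/r)·(e^{−βs} K(t+r+s) − e^{βs} K(t+r−s))| ≤ C·(s/r) ≤ C. -/
/-!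
With `Si x = ∫₀ˣ sin α / α`, the hypothesis forces `K p = K 0 - Si (A p)`. Since `Si` is
continuous, odd and converges at `+∞`, it is bounded, hence so is `K`; and `|sin α / α| ≤ 1`
makes `K` Lipschitz with constant `|A|`. Splitting
`e^{-βs} K(x+s) - e^{βs} K(x-s) = (e^{-βs} - 1) K(x+s) + (K(x+s) - K(x-s)) + (1 - e^{βs}) K(x-s)`
bounds it by a constant times `s` for `s ≤ L`, and `s ≤ r` lets us divide by `r`.
-/
open Real Filter Topology Asymptotics Bornology intervalIntegral MeasureTheory

lemma abs_exp_sub_one_le_abs_mul_exp_abs (x : ℝ) : |exp x - 1| ≤ |x| * exp |x| := by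
  have h := Complex.norm_exp_sub_sum_le_norm_mul_exp (x : ℂ) 1
  simp only [Finset.range_one, Finset.sum_singleton, pow_zero, Nat.factorial_zero, Nat.cast_one,
    div_one, Complex.norm_real, norm_eq_abs, pow_one] at h
  exact_mod_cast h

lemma abs_sin_div_self_le_one (x : ℝ) : |sin x / x| ≤ 1 := by
  rcases eq_or_ne x 0 with rfl | hx
  · simp
  · simpa [sinc_of_ne_zero hx] using abs_sinc_le_one x

lemma intervalIntegrable_sin_div_self (a b : ℝ) :
    IntervalIntegrable (fun x => sin x / x) volume a b :=
  (intervalIntegrable_const (c := (1:ℝ))).mono_fun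
    (continuous_sin.measurable.div measurable_id).aestronglyMeasurable
    (Eventually.of_forall fun x => by
      simpa only [norm_eq_abs, norm_one] using abs_sin_div_self_le_one x)

lemma integral_sin_div_self_neg (x : ℝ) :
    ∫ α in (0:ℝ)..-x, sin α / α = -∫ α in (0:ℝ)..x, sin α / α := by
  have h := intervalIntegral.integral_comp_neg (a := 0) (b := x) (fun α => sin α / α)
  simp only [sin_neg, neg_div_neg_eq, neg_zero] at h
  rw [h, integral_symm]

lemma exists_abs_integral_sin_div_self_le {l : ℝ}
    (h : Tendsto (fun R => ∫ α in (0:ℝ)..R, sin α / α) atTop (𝓝 l)) :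
    ∃ M, ∀ x, |∫ α in (0:ℝ)..x, sin α / α| ≤ M := by
  have hcont : Continuous fun x => |∫ α in (0:ℝ)..x, sin α / α| :=
    (continuous_primitive intervalIntegrable_sin_div_self 0).abs
  have heven : Function.Even fun x => |∫ α in (0:ℝ)..x, sin α / α| := fun x => by
    simp only [integral_sin_div_self_neg, abs_neg]
  obtain ⟨M, hM⟩ := isBounded_iff_forall_norm_le.1
    ((hcont.isBounded_range_iff_isBigO_atTop_of_even heven).2 (h.abs.isBigO_one ℝ))
  exact ⟨M, fun x => by simpa using hM _ ⟨x, rfl⟩⟩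

lemma eq_sub_integral_sin_div_self_of_tendsto {A : ℝ} {K : ℝ → ℝ}
    (hK : ∀ p, Tendsto (fun R => ∫ α in (A*p)..R, sin α / α) atTop (𝓝 (K p))) (p : ℝ) :
    K p = K 0 - ∫ α in (0:ℝ)..A*p, sin α / α := by
  have h₀ : Tendsto (fun R => ∫ α in (0:ℝ)..R, sin α / α) atTop (𝓝 (K 0)) := by
    simpa using hK 0
  refine tendsto_nhds_unique (hK p) ?_
  simpa only [integral_interval_sub_left (intervalIntegrable_sin_div_self _ _)
    (intervalIntegrable_sin_div_self _ _)] using h₀.sub_const (∫ α in (0:ℝ)..A*p, sin α / α)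

lemma exists_abs_le_of_tendsto_integral_sin_div_self {A : ℝ} {K : ℝ → ℝ}
    (hK : ∀ p, Tendsto (fun R => ∫ α in (A*p)..R, sin α / α) atTop (𝓝 (K p))) :
    ∃ M, ∀ p, |K p| ≤ M := by
  obtain ⟨M, hM⟩ := exists_abs_integral_sin_div_self_le (by simpa using hK 0)
  refine ⟨|K 0| + M, fun p => ?_⟩
  rw [eq_sub_integral_sin_div_self_of_tendsto hK p]
  exact (abs_sub _ _).trans (add_le_add le_rfl (hM _))

lemma abs_sub_le_of_tendsto_integral_sin_div_self {A : ℝ} {K : ℝ → ℝ}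
    (hK : ∀ p, Tendsto (fun R => ∫ α in (A*p)..R, sin α / α) atTop (𝓝 (K p))) (p q : ℝ) :
    |K p - K q| ≤ |A| * |p - q| := by
  have hdiff : K p - K q = ∫ α in (A*p)..(A*q), sin α / α := by
    rw [eq_sub_integral_sin_div_self_of_tendsto hK p, eq_sub_integral_sin_div_self_of_tendsto hK q,
      ← integral_interval_sub_left (intervalIntegrable_sin_div_self 0 (A*q))
        (intervalIntegrable_sin_div_self 0 (A*p))]
    ring
  have h := norm_integral_le_of_norm_le_const (a := A*p) (b := A*q) (C := 1)
    (fun α _ => (norm_eq_abs _).trans_le (abs_sin_div_self_le_one α))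
  rw [hdiff, ← norm_eq_abs]
  calc _ ≤ 1 * |A*q - A*p| := h
    _ = |A| * |p - q| := by rw [one_mul, ← mul_sub, abs_mul, abs_sub_comm]

lemma abs_exp_neg_mul_sub_exp_mul_le {f : ℝ → ℝ} {M Λ : ℝ} (hM : ∀ x, |f x| ≤ M)
    (hΛ : ∀ x y, |f x - f y| ≤ Λ * |x - y|) (x y s : ℝ) :
    |exp (-y) * f (x + s) - exp y * f (x - s)| ≤ 2 * M * |y| * exp |y| + 2 * Λ * |s| := by
  have hsplit : exp (-y) * f (x + s) - exp y * f (x - s)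
      = (exp (-y) - 1) * f (x + s) + (f (x + s) - f (x - s)) + (1 - exp y) * f (x - s) := by
    ring
  have h₁ : |(exp (-y) - 1) * f (x + s)| ≤ |y| * exp |y| * M := by
    rw [abs_mul]
    gcongr
    · simpa using abs_exp_sub_one_le_abs_mul_exp_abs (-y)
    · exact hM _
  have h₂ : |f (x + s) - f (x - s)| ≤ Λ * (2 * |s|) := by
    have := hΛ (x + s) (x - s)
    rwa [show x + s - (x - s) = 2 * s by ring, abs_mul, abs_two] at this
  have h₃ : |(1 - exp y) * f (x - s)| ≤ |y| * exp |y| * M := by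
    rw [abs_mul, abs_sub_comm]
    gcongr
    · exact abs_exp_sub_one_le_abs_mul_exp_abs y
    · exact hM _
  rw [hsplit]
  linarith [abs_add_three ((exp (-y) - 1) * f (x + s)) (f (x + s) - f (x - s))
    ((1 - exp y) * f (x - s))]

theorem stmt_11_general (β A L : ℝ)
    (K : ℝ → ℝ)
    (hK : ∀ p, Filter.Tendsto (fun R => ∫ α in (A*p)..R, Real.sin α / α)
      Filter.atTop (nhds (K p))) :
    ∃ C : ℝ, ∀ (t r s : ℝ), 0 < s → s ≤ r → r ≤ L →
      |(1/r) * (Real.exp (-β*s) * K (t+r+s) - Real.exp (β*s) * K (t+r-s))| ≤ C * (s/r) ∧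
      C * (s/r) ≤ C := by
  obtain ⟨M, hM⟩ := exists_abs_le_of_tendsto_integral_sin_div_self hK
  have hM₀ : 0 ≤ M := (abs_nonneg _).trans (hM 0)
  refine ⟨2 * M * |β| * exp (|β| * L) + 2 * |A|, fun t r s hs hsr hrL => ?_⟩
  have hr : 0 < r := hs.trans_le hsr
  refine ⟨?_, mul_le_of_le_one_right (by positivity) (div_le_one_of_le₀ hsr hr.le)⟩
  rw [abs_mul, abs_of_pos (one_div_pos.2 hr), neg_mul, ← mul_div_assoc, one_div_mul_eq_div]
  gcongr
  calc _ ≤ 2 * M * |β * s| * exp |β * s| + 2 * |A| * |s| :=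
        abs_exp_neg_mul_sub_exp_mul_le hM (abs_sub_le_of_tendsto_integral_sin_div_self hK)
          (t + r) (β * s) s
    _ = 2 * M * |β| * exp (|β| * s) * s + 2 * |A| * s := by rw [abs_mul, abs_of_pos hs]; ring
    _ ≤ (2 * M * |β| * exp (|β| * L) + 2 * |A|) * s := by
        rw [add_mul]
        gcongr
        exact hsr.trans hrL

theorem stmt_11 (β A L : ℝ) (hβ : 0 < β) (hA : 1 ≤ A) (hL : 0 < L)
    (K : ℝ → ℝ)
    (hK : ∀ p, Filter.Tendsto (fun R => ∫ α in (A*p)..R, Real.sin α / α)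
      Filter.atTop (nhds (K p))) :
    ∃ C : ℝ, ∀ (t r s : ℝ), 0 < s → s ≤ r → r ≤ L →
      |(1/r) * (Real.exp (-β*s) * K (t+r+s) - Real.exp (β*s) * K (t+r-s))| ≤ C * (s/r) ∧
      C * (s/r) ≤ C :=
  stmt_11_general β A L K hK
end
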